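/- For any natural number r ≥ 1, the ring R of formal triangular matrices [[a, b], [0, c]] with a ∈ ℤ/2^(r+1), b ∈ ℤ/2, c ∈ ℤ, subject to a ≡ c (mod 2), has no idempotents other than 0 and 1. -/
import Mathlib

lemma idem_zmod_two_pow (k : ℕ) (a : ZMod (2 ^ (k + 1))) (ha : a * a = a) :
    a = 0 ∨ a = 1 := by
  set n : ℤ := (a.val : ℤ) with hn
  have hcast : ((n : ZMod (2 ^ (k + 1)))) = a := by
    simp [hn, ZMod.natCast_val, ZMod.intCast_cast]
  have hdvd : ((2 : ℤ) ^ (k + 1)) ∣ n * (n - 1) := by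
    have : ((n * (n - 1) : ℤ) : ZMod (2 ^ (k + 1))) = 0 := by
      push_cast
      rw [hcast, mul_sub, mul_one, ha, sub_self]
    have := (ZMod.intCast_zmod_eq_zero_iff_dvd _ _).mp this
    exact_mod_cast this
  by_cases h2 : (2 : ℤ) ∣ n
  · left
    have h2' : ¬ (2 : ℤ) ∣ (n - 1) := by omega
    have hcop : IsCoprime ((2:ℤ) ^ (k+1)) (n - 1) :=
      (IsCoprime.pow_left ((Int.prime_two.coprime_iff_not_dvd).mpr h2'))
    have : ((2 : ℤ) ^ (k + 1)) ∣ n := hcop.dvd_of_dvd_mul_right hdvd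
    rw [← hcast]
    rw [ZMod.intCast_zmod_eq_zero_iff_dvd]
    exact_mod_cast this
  · right
    have hcop : IsCoprime ((2:ℤ) ^ (k+1)) n :=
      (IsCoprime.pow_left ((Int.prime_two.coprime_iff_not_dvd).mpr h2))
    have : ((2 : ℤ) ^ (k + 1)) ∣ (n - 1) := hcop.dvd_of_dvd_mul_left hdvd
    have : ((n - 1 : ℤ) : ZMod (2 ^ (k+1))) = 0 := by
      rw [ZMod.intCast_zmod_eq_zero_iff_dvd]; exact_mod_cast this
    push_cast at this
    rw [hcast, sub_eq_zero] at this
    exact this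



/-- The ring of formal triangular matrices `[[a, b], [0, c]]` with `a ∈ ℤ/2^(r+1)`,
`b ∈ ℤ/2`, `c ∈ ℤ` and `a ≡ c (mod 2)` (the endomorphism ring of the Chang atom
`C^5(2^r η)`) has no idempotents other than `0 = (0,0,0)` and `1 = (1,0,1)`.
Idempotency of `(a,b,c)` under the matrix multiplication
`(a,b,c)·(a',b',c') = (a a', a b' + b c', c c')` is spelled out componentwise. -/
theorem stmt1 (r : ℕ) (hr : 1 ≤ r)
    (a : ZMod (2 ^ (r + 1))) (b : ZMod 2) (c : ℤ)
    (hac : (ZMod.cast a : ZMod 2) = (c : ZMod 2))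
    (ha : a * a = a)
    (hb : (ZMod.cast a : ZMod 2) * b + b * (c : ZMod 2) = b)
    (hc : c * c = c) :
    (a = 0 ∧ b = 0 ∧ c = 0) ∨ (a = 1 ∧ b = 0 ∧ c = 1) := by
  have h2 : (2 : ℕ) ∣ 2 ^ (r + 1) := dvd_pow_self 2 (Nat.succ_ne_zero r)
  have hc01 : c = 0 ∨ c = 1 := by
    have : c * (c - 1) = 0 := by rw [mul_sub, mul_one, hc, sub_self]
    rcases mul_eq_zero.mp this with h | h
    · exact Or.inl h
    · exact Or.inr (by linarith [sub_eq_zero.mp h])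
  rcases idem_zmod_two_pow r a ha with rfl | rfl
  · have h0 : (ZMod.cast (0 : ZMod (2 ^ (r + 1))) : ZMod 2) = 0 := by
      simp
    rcases hc01 with rfl | rfl
    · left
      refine ⟨rfl, ?_, rfl⟩
      rw [h0, zero_mul] at hb
      simpa using hb.symm
    · exfalso
      rw [h0] at hac
      simp at hac
  · have h1 : (ZMod.cast (1 : ZMod (2 ^ (r + 1))) : ZMod 2) = 1 :=
      ZMod.cast_one h2
    rcases hc01 with rfl | rfl
    · exfalso
      rw [h1] at hac
      simp at hac
    · right
      refine ⟨rfl, ?_, rfl⟩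
      rw [h1, one_mul] at hb
      simp only [Int.cast_one, mul_one] at hb
      have : b + b = 0 := by
        have : (2 : ZMod 2) * b = 0 := by simp [(by decide : (2 : ZMod 2) = 0)]
        rwa [two_mul] at this
      rw [this] at hb
      exact hb.symm
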